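/- arXiv:2308.05706 — 2 statements merged into one kernel-verified Lean document; each statement's English description precedes it below -/
import Mathlib

section
/- Let k be a field, H a Hopf algebra over k, and I a left ideal coideal of H. Then the linear map ζ : H ⊗_k H^{co H/I} → H ⊗_k H defined by ζ(x ⊗ b) = Σ x₍₁₎ ⊗ x₍₂₎b is injective and its image is exactly the cotensor product H □^{H/I} H; in particular ζ gives a linear isomorphism H ⊗_k H^{co H/I} ≅ H □^{H/I} H. -/
open TensorProduct

noncomputable section

namespace HopfGalois

variable (k : Type*) (H : Type*) [Field k] [Ring H] [HopfAlgebra k H]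

/-- The linear map `H ⊗ H → H`, `x ⊗ y ↦ ε(x) • y`. -/
def epsTensorId : H ⊗[k] H →ₗ[k] H :=
  (TensorProduct.lid k H).toLinearMap ∘ₗ
    TensorProduct.map (Coalgebra.counit : H →ₗ[k] k) (LinearMap.id : H →ₗ[k] H)

/-- The linear map `H ⊗ H → H`, `x ⊗ y ↦ ε(y) • x`. -/
def idTensorEps : H ⊗[k] H →ₗ[k] H :=
  (TensorProduct.rid k H).toLinearMap ∘ₗ
    TensorProduct.map (LinearMap.id : H →ₗ[k] H) (Coalgebra.counit : H →ₗ[k] k)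

/-- `x ⊗ y ↦ Σ x₍₁₎ ⊗ π_I(x₍₂₎) ⊗ y`. -/
def cotensorL (I : Submodule k H) : H ⊗[k] H →ₗ[k] H ⊗[k] ((H ⧸ I) ⊗[k] H) :=
  TensorProduct.map (LinearMap.id : H →ₗ[k] H)
      (TensorProduct.map I.mkQ (LinearMap.id : H →ₗ[k] H))
    ∘ₗ (TensorProduct.assoc k H H H).toLinearMap
    ∘ₗ TensorProduct.map (Coalgebra.comul : H →ₗ[k] H ⊗[k] H) (LinearMap.id : H →ₗ[k] H)

/-- `x ⊗ y ↦ Σ x ⊗ π_I(y₍₁₎) ⊗ y₍₂₎`. -/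
def cotensorR (I : Submodule k H) : H ⊗[k] H →ₗ[k] H ⊗[k] ((H ⧸ I) ⊗[k] H) :=
  TensorProduct.map (LinearMap.id : H →ₗ[k] H)
    (TensorProduct.map I.mkQ (LinearMap.id : H →ₗ[k] H)
      ∘ₗ (Coalgebra.comul : H →ₗ[k] H ⊗[k] H))

/-- The cotensor product `H □^{H/I} H` as a subspace of `H ⊗ H`. -/
def cotensor (I : Submodule k H) : Submodule k (H ⊗[k] H) :=
  LinearMap.ker (cotensorL k H I - cotensorR k H I)

/-- The subspace of coinvariants `H^{co H/I}`:
`{x ∈ H : Σ π_I(x₍₁₎) ⊗ x₍₂₎ = π_I(1) ⊗ x}`. -/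
def coinv (I : Submodule k H) : Submodule k H :=
  LinearMap.ker
    ((TensorProduct.map I.mkQ (LinearMap.id : H →ₗ[k] H)
        ∘ₗ (Coalgebra.comul : H →ₗ[k] H ⊗[k] H))
      - TensorProduct.mk k (H ⧸ I) H (I.mkQ 1))

/-- A left ideal coideal: a left ideal `I` with `ε(I) = 0` and `Δ(I) ⊆ I ⊗ H + H ⊗ I`. -/
structure IsLeftIdealCoideal (I : Submodule k H) : Prop where
  mul_mem_left : ∀ (h x : H), x ∈ I → h * x ∈ I
  counit_zero : ∀ x ∈ I, (Coalgebra.counit : H →ₗ[k] k) x = 0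
  comul_mem : ∀ x ∈ I, (Coalgebra.comul : H →ₗ[k] H ⊗[k] H) x ∈
    LinearMap.range (TensorProduct.map I.subtype (LinearMap.id : H →ₗ[k] H)) ⊔
      LinearMap.range (TensorProduct.map (LinearMap.id : H →ₗ[k] H) I.subtype)

/-- A right coideal subalgebra: a subalgebra `B` with `Δ(B) ⊆ B ⊗ H`. -/
def IsRightCoidealSubalgebra (B : Subalgebra k H) : Prop :=
  ∀ b ∈ B, (Coalgebra.comul : H →ₗ[k] H ⊗[k] H) b ∈
    LinearMap.range
      (TensorProduct.map (Subalgebra.toSubmodule B).subtype (LinearMap.id : H →ₗ[k] H))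

/-- The left ideal of `H` generated by a subset `S`, as a `k`-subspace of `H`. -/
def leftIdealGen (S : Set H) : Submodule k H :=
  Submodule.span k {z : H | ∃ h : H, ∃ b ∈ S, z = h * b}

/-- `S⁺ = S ∩ ker ε`. -/
def plusPart (S : Set H) : Set H :=
  {b ∈ S | (Coalgebra.counit : H →ₗ[k] k) b = 0}

/-- `H·S⁺`, the left ideal of `H` generated by `S ∩ ker ε`. -/
def HSplus (S : Set H) : Submodule k H :=
  leftIdealGen k H (plusPart k H S)

/-- The subspace `J_B ⊆ H ⊗ H` spanned by `{xb ⊗ y − x ⊗ by : x, y ∈ H, b ∈ B}`,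
so that `H ⊗_B H = (H ⊗ H)/J_B`. -/
def JB (S : Set H) : Submodule k (H ⊗[k] H) :=
  Submodule.span k
    {z : H ⊗[k] H | ∃ x y : H, ∃ b ∈ S, z = (x * b) ⊗ₜ[k] y - x ⊗ₜ[k] (b * y)}

/-- `B` is the equalizer of the two canonical maps `H → H ⊗_B H`. -/
def equalizerCond (S : Set H) : Prop :=
  {h : H | h ⊗ₜ[k] (1 : H) - (1 : H) ⊗ₜ[k] h ∈ JB k H S} = S

/-- `H/I` is the coequalizer of `ε ⊗ id` and `id ⊗ ε` restricted to `H □^{H/I} H`, i.e.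
`I` is the subspace spanned by `{Σ ε(xᵢ)yᵢ − Σ xᵢε(yᵢ) : Σ xᵢ ⊗ yᵢ ∈ H □^{H/I} H}`. -/
def coequalizerCond (I : Submodule k H) : Prop :=
  I = Submodule.map (epsTensorId k H - idTensorEps k H) (cotensor k H I)


/-- The linear map `ζ : H ⊗ H^{co H/I} → H ⊗ H`, `x ⊗ b ↦ Σ x₍₁₎ ⊗ x₍₂₎b`. -/
def zeta (k H : Type*) [Field k] [Ring H] [HopfAlgebra k H] (I : Submodule k H) :
    H ⊗[k] ↥(coinv k H I) →ₗ[k] H ⊗[k] H :=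
  TensorProduct.map (LinearMap.id : H →ₗ[k] H) (LinearMap.mul' k H)
    ∘ₗ (TensorProduct.assoc k H H H).toLinearMap
    ∘ₗ TensorProduct.map (Coalgebra.comul : H →ₗ[k] H ⊗[k] H) (coinv k H I).subtype

/-! An algebra map `ρ : H → End M` twists `H ⊗ M` by `x ⊗ m ↦ Σ x₍₁₎ ⊗ ρ(x₍₂₎) m`. Twisting
is multiplicative for the convolution product, so this twist is invertible, with inverse the
twist by `ρ ∘ S`. Let `ζ̃` and `T` be the twists for `M = H` (left multiplication) and for
`M = (H/I) ⊗ H` (diagonal action); `ζ` is `ζ̃` restricted to `H ⊗ H^{co H/I}`. If `L`, `R` are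
the two maps whose equalizer is `H □^{H/I} H`, coassociativity and multiplicativity of `Δ` give
`(L − R) ∘ ζ̃ = T ∘ (id ⊗ δ)` with `δ b = π(1) ⊗ b − Σ π(b₍₁₎) ⊗ b₍₂₎`. As `T` is injective,
`H □^{H/I} H = ζ̃ (ker (id ⊗ δ))`, and `ker (id ⊗ δ) = H ⊗ ker δ = H ⊗ H^{co H/I}` because every
`k`-module is flat. -/

open Coalgebra LinearMap WithConv

section Twist

variable {k C M N : Type*} [CommSemiring k] [AddCommMonoid C] [Module k C] [Coalgebra k C]
  [AddCommMonoid M] [Module k M] [AddCommMonoid N] [Module k N]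

/-- `c ⊗ m ↦ Σ c₍₁₎ ⊗ φ(c₍₂₎) m`. -/
def twist (φ : WithConv (C →ₗ[k] Module.End k M)) : Module.End k (C ⊗[k] M) :=
  lTensor C (lift φ.ofConv) ∘ₗ (TensorProduct.assoc k C C M).toLinearMap ∘ₗ rTensor M comul

lemma twist_tmul {c : C} {ι : Type*} (𝓡 : Repr k c ι)
    (φ : WithConv (C →ₗ[k] Module.End k M)) (m : M) :
    twist φ (c ⊗ₜ m) = ∑ i ∈ 𝓡.index, 𝓡.left i ⊗ₜ φ (𝓡.right i) m := by
  simp [twist, ← 𝓡.eq, sum_tmul]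

lemma twist_mul (φ ψ : WithConv (C →ₗ[k] Module.End k M)) :
    twist (φ * ψ) = twist φ * twist ψ := by
  ext c m
  set 𝓡 := ℛ k c
  have coassoc := congr(lTensor C (applyₗ m ∘ₗ mul' k (Module.End k M) ∘ₗ
    map φ.ofConv ψ.ofConv) $(sum_tmul_tmul_eq 𝓡 (fun i ↦ ℛ k (𝓡.left i)) (fun i ↦ ℛ k (𝓡.right i))))
  simp only [map_sum, lTensor_tmul, coe_comp, Function.comp_apply, map_tmul, mul'_apply,
    applyₗ_apply_apply, Module.End.mul_apply] at coassoc
  simp only [AlgebraTensorModule.curry_apply, curry_apply, LinearMap.coe_restrictScalars,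
    Module.End.mul_apply, twist_tmul 𝓡, map_sum, twist_tmul (ℛ k (𝓡.left _)), coassoc]
  refine Finset.sum_congr rfl fun i _ ↦ ?_
  rw [(ℛ k (𝓡.right i)).convMul_apply, LinearMap.sum_apply, tmul_sum]
  rfl

lemma twist_one : twist (1 : WithConv (C →ₗ[k] Module.End k M)) = 1 := by
  ext c m
  set 𝓡 := ℛ k c
  have counit_right := congr(TensorProduct.rid k C $(sum_tmul_counit_eq 𝓡))
  simp only [map_sum, rid_tmul, one_smul] at counit_right
  simp only [AlgebraTensorModule.curry_apply, curry_apply, LinearMap.coe_restrictScalars,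
    twist_tmul 𝓡, convOne_apply, Module.algebraMap_end_apply, tmul_smul, Module.End.one_apply]
  simp only [smul_tmul', ← sum_tmul, counit_right]

lemma lTensor_comp_twist {f : M →ₗ[k] N} {φ : WithConv (C →ₗ[k] Module.End k M)}
    {ψ : WithConv (C →ₗ[k] Module.End k N)} (hf : ∀ c m, f (φ c m) = ψ c (f m)) :
    lTensor C f ∘ₗ twist φ = twist ψ ∘ₗ lTensor C f := by
  ext c m
  simp [twist_tmul (ℛ k c), hf]

end Twist

section TwistEquiv

variable {k H M : Type*} [CommSemiring k] [Semiring H] [HopfAlgebra k H]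
  [AddCommMonoid M] [Module k M]

lemma algHom_comp_antipode_mul_algHom (ρ : H →ₐ[k] Module.End k M) :
    toConv (ρ.toLinearMap ∘ₗ HopfAlgebra.antipode k) * toConv ρ.toLinearMap = 1 := by
  have := algHom_comp_convMul_distrib ρ (toConv (HopfAlgebra.antipode k)) (toConv LinearMap.id)
  rw [antipode_mul_id] at this
  ext c : 2
  simpa using congr($this c).symm

lemma algHom_mul_algHom_comp_antipode (ρ : H →ₐ[k] Module.End k M) :
    toConv ρ.toLinearMap * toConv (ρ.toLinearMap ∘ₗ HopfAlgebra.antipode k) = 1 := by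
  have := algHom_comp_convMul_distrib ρ (toConv LinearMap.id) (toConv (HopfAlgebra.antipode k))
  rw [id_mul_antipode] at this
  ext c : 2
  simpa using congr($this c).symm

def twistEquiv (ρ : H →ₐ[k] Module.End k M) : (H ⊗[k] M) ≃ₗ[k] H ⊗[k] M :=
  .ofLinearMap (twist (toConv ρ.toLinearMap))
    (twist (toConv (ρ.toLinearMap ∘ₗ HopfAlgebra.antipode k)))
    (by rw [← Module.End.mul_eq_comp, ← twist_mul, algHom_mul_algHom_comp_antipode, twist_one]; rfl)
    (by rw [← Module.End.mul_eq_comp, ← twist_mul, algHom_comp_antipode_mul_algHom, twist_one]; rfl)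

lemma coe_twistEquiv (ρ : H →ₐ[k] Module.End k M) :
    (twistEquiv ρ : H ⊗[k] M →ₗ[k] H ⊗[k] M) = twist (toConv ρ.toLinearMap) := rfl

end TwistEquiv

section QuotientAction

variable {k H : Type*} [CommRing k] [Ring H] [Algebra k H] {I : Submodule k H}

def quotientAction (hI : ∀ h x, x ∈ I → h * x ∈ I) : H →ₐ[k] Module.End k (H ⧸ I) where
  toFun h := I.mapQ I (mulLeft k h) (hI h)
  map_one' := by ext; simp
  map_mul' a b := by ext x; exact congrArg I.mkQ (mul_assoc a b x)
  map_zero' := by ext; simp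
  map_add' a b := by ext x; exact congrArg I.mkQ (add_mul a b x)
  commutes' r := by ext x; exact congrArg I.mkQ (Algebra.smul_def r x).symm

@[simp]
lemma quotientAction_mkQ (hI : ∀ h x, x ∈ I → h * x ∈ I) (h x : H) :
    quotientAction hI h (Submodule.Quotient.mk x) = Submodule.Quotient.mk (h * x) := rfl

end QuotientAction

section DiagonalAction

variable {k H : Type*} [CommRing k] [Ring H] [Bialgebra k H] {I : Submodule k H}

def diagonalAction (hI : ∀ h x, x ∈ I → h * x ∈ I) :
    H →ₐ[k] Module.End k ((H ⧸ I) ⊗[k] H) :=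
  Module.endTensorEndAlgHom.comp
    ((Algebra.TensorProduct.map (quotientAction hI) (Algebra.lmul k H)).comp
      (Bialgebra.comulAlgHom k H))

lemma diagonalAction_tmul (hI : ∀ h x, x ∈ I → h * x ∈ I) {h : H} {ι : Type*} (𝓡 : Repr k h ι)
    (q : H ⧸ I) (y : H) :
    diagonalAction hI h (q ⊗ₜ y)
      = ∑ i ∈ 𝓡.index, quotientAction hI (𝓡.left i) q ⊗ₜ (𝓡.right i * y) := by
  simp [diagonalAction, ← 𝓡.eq, Module.endTensorEndAlgHom_apply]

def quotientCoaction (I : Submodule k H) : H →ₗ[k] (H ⧸ I) ⊗[k] H :=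
  map I.mkQ LinearMap.id ∘ₗ comul

lemma quotientCoaction_mul (hI : ∀ h x, x ∈ I → h * x ∈ I) (h y : H) :
    quotientCoaction I (h * y) = diagonalAction hI h (quotientCoaction I y) := by
  set 𝓡 := ℛ k h
  set 𝓢 := ℛ k y
  simp only [quotientCoaction, LinearMap.comp_apply, Bialgebra.comul_mul, ← 𝓡.eq, ← 𝓢.eq,
    Finset.sum_mul_sum, Algebra.TensorProduct.tmul_mul_tmul, map_sum, map_tmul,
    diagonalAction_tmul hI 𝓡, Submodule.mkQ_apply, id_apply]
  rw [Finset.sum_comm]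
  rfl

end DiagonalAction

section Cotensor

variable {k H : Type*} [Field k] [Ring H] [HopfAlgebra k H] {I : Submodule k H}

def coinvDefect (I : Submodule k H) : H →ₗ[k] (H ⧸ I) ⊗[k] H :=
  quotientCoaction I - TensorProduct.mk k (H ⧸ I) H (I.mkQ 1)

lemma zeta_eq_twistEquiv_comp :
    zeta k H I
      = (twistEquiv (Algebra.lmul k H)).toLinearMap ∘ₗ lTensor H (coinv k H I).subtype := by
  ext x b
  simp [zeta, coe_twistEquiv, twist_tmul (ℛ k x), ← (ℛ k x).eq, sum_tmul]

lemma cotensorL_comp_twist (hI : ∀ h x, x ∈ I → h * x ∈ I) :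
    cotensorL k H I ∘ₗ twist (toConv (Algebra.lmul k H).toLinearMap)
      = twist (toConv (diagonalAction hI).toLinearMap)
          ∘ₗ lTensor H (TensorProduct.mk k (H ⧸ I) H (I.mkQ 1)) := by
  ext x y
  set 𝓡 := ℛ k x
  have coassoc := congr(lTensor H (map I.mkQ (mulRight k y))
    $(sum_tmul_tmul_eq 𝓡 (fun i ↦ ℛ k (𝓡.left i)) (fun i ↦ ℛ k (𝓡.right i))))
  simpa [twist_tmul 𝓡, diagonalAction_tmul hI (ℛ k (𝓡.right _)), cotensorL,
    ← (ℛ k (𝓡.left _)).eq, sum_tmul, tmul_sum] using coassoc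

lemma cotensorR_comp_twist (hI : ∀ h x, x ∈ I → h * x ∈ I) :
    cotensorR k H I ∘ₗ twist (toConv (Algebra.lmul k H).toLinearMap)
      = twist (toConv (diagonalAction hI).toLinearMap) ∘ₗ lTensor H (quotientCoaction I) :=
  lTensor_comp_twist fun h y ↦ quotientCoaction_mul hI h y

lemma cotensor_eq_map_ker (hI : ∀ h x, x ∈ I → h * x ∈ I) :
    cotensor k H I
      = (ker (lTensor H (coinvDefect I))).map (twistEquiv (Algebra.lmul k H)).toLinearMap := by
  have twist_ker : ker (twist (toConv (diagonalAction hI).toLinearMap)) = ⊥ :=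
    ker_eq_bot.mpr (twistEquiv (diagonalAction hI)).injective
  have defect : (cotensorL k H I - cotensorR k H I) ∘ₗ (twistEquiv (Algebra.lmul k H)).toLinearMap
      = -(twist (toConv (diagonalAction hI).toLinearMap)
          ∘ₗ lTensor H (coinvDefect I)) := by
    rw [sub_comp, coe_twistEquiv, cotensorL_comp_twist hI, cotensorR_comp_twist hI, coinvDefect,
      lTensor_sub, comp_sub]
    abel
  calc cotensor k H I
      = ((ker (cotensorL k H I - cotensorR k H I)).comap
          (twistEquiv (Algebra.lmul k H)).toLinearMap).map
          (twistEquiv (Algebra.lmul k H)).toLinearMap :=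
        (Submodule.map_comap_eq_of_surjective (twistEquiv _).surjective _).symm
    _ = _ := by rw [← ker_comp, defect, ker_neg, ker_comp_of_ker_eq_bot _ twist_ker]

end Cotensor

/-- `ζ` is injective with image the cotensor product `H □^{H/I} H`,
hence a linear isomorphism `H ⊗ H^{co H/I} ≅ H □^{H/I} H`. -/
theorem zeta_injective_range_eq_cotensor (k H : Type*) [Field k] [Ring H] [HopfAlgebra k H]
    (I : Submodule k H) (hI : IsLeftIdealCoideal k H I) :
    Function.Injective (zeta k H I) ∧ LinearMap.range (zeta k H I) = cotensor k H I := by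
  have exact : range (lTensor H (coinv k H I).subtype)
      = ker (lTensor H (coinvDefect I)) :=
    (Module.Flat.lTensor_exact H (exact_subtype_ker_map _)).linearMap_ker_eq.symm
  rw [zeta_eq_twistEquiv_comp, cotensor_eq_map_ker hI.mul_mem_left, range_comp, exact]
  exact ⟨(twistEquiv _).injective.comp
    (Module.Flat.lTensor_preserves_injective_linearMap _ (Submodule.injective_subtype _)), rfl⟩

end HopfGalois
end
end

section
/- Let k be a field, H a Hopf algebra over k, and I a left ideal coideal of H. Set B := H^{co H/I}. Then B = H^{co H/(HB⁺)}, where HB⁺ is the left ideal of H generated by B ∩ ker ε; that is, Ψ ∘ Φ ∘ Ψ = Ψ for the assignments Ψ(I) = H^{co H/I} and Φ(B) = HB⁺. -/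
/-!
Write `B = H^{co H/I}` and `J = HB⁺`. Applying `id ⊗ ε` to the coinvariance identity shows
`b - ε(b)1 ∈ I` for every `b ∈ B`, so `B⁺ ⊆ I`, hence `J ⊆ I` because `I` is a left ideal, and
`H^{co H/J} ⊆ B` because coinvariants grow with the ideal. Conversely, `B` is the kernel of
`T = (π_I ⊗ id)Δ - π_I(1) ⊗ id`, and coassociativity gives `(T ⊗ id)Δ(x) = 0` for `x ∈ B`;
as `H` is flat over the field `k`, `ker (T ⊗ id) = B ⊗ H`, so `Δ(B) ⊆ B ⊗ H`. Since
`b - ε(b)1 ∈ J` for `b ∈ B`, the map `π_J` agrees with `π_J(1)ε` on `B`, and therefore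
`(π_J ⊗ id)Δ(x) = π_J(1) ⊗ (ε ⊗ id)Δ(x) = π_J(1) ⊗ x` for `x ∈ B`.
-/

open TensorProduct

noncomputable section

namespace HopfGalois

variable (k : Type*) (H : Type*) [Field k] [Ring H] [HopfAlgebra k H]

section Coalgebra

variable {R A M : Type*} [CommSemiring R] [AddCommMonoid A] [Module R A] [Coalgebra R A]
  [AddCommMonoid M] [Module R M]

theorem rTensor_rTensor_comp_comul_comul (f : A →ₗ[R] M) (x : A) :
    ((f.rTensor A ∘ₗ Coalgebra.comul).rTensor A) (Coalgebra.comul x) =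
      (TensorProduct.assoc R M A A).symm
        ((Coalgebra.comul : A →ₗ[R] A ⊗[R] A).lTensor M (f.rTensor A (Coalgebra.comul x))) := by
  rw [LinearMap.rTensor_comp_apply, ← Coalgebra.coassoc_symm_apply]
  change TensorProduct.map (TensorProduct.map f LinearMap.id) LinearMap.id _ = _
  rw [TensorProduct.map_map_assoc_symm, TensorProduct.map_id, ← LinearMap.rTensor,
    ← LinearMap.comp_apply, LinearMap.rTensor_comp_lTensor, ← LinearMap.lTensor_comp_rTensor,
    LinearMap.comp_apply]

end Coalgebra

theorem rTensor_mk_apply_eq_assoc_symm {R M N P : Type*} [CommSemiring R] [AddCommMonoid M]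
    [AddCommMonoid N] [AddCommMonoid P] [Module R M] [Module R N] [Module R P] (m : M)
    (z : N ⊗[R] P) :
    (TensorProduct.mk R M N m).rTensor P z = (TensorProduct.assoc R M N P).symm (m ⊗ₜ z) := by
  induction z using TensorProduct.induction_on with
  | zero => simp
  | tmul n p => rfl
  | add y z hy hz => rw [map_add, hy, hz, tmul_add, map_add]

variable {k H}

theorem mem_coinv_iff {I : Submodule k H} {x : H} :
    x ∈ coinv k H I ↔ I.mkQ.rTensor H (Coalgebra.comul x) = I.mkQ 1 ⊗ₜ[k] x :=
  sub_eq_zero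

theorem one_mem_coinv (I : Submodule k H) : (1 : H) ∈ coinv k H I := by
  rw [mem_coinv_iff, Bialgebra.comul_one, Algebra.TensorProduct.one_def]
  rfl

theorem coinv_mono : Monotone (coinv k H) := by
  intro J I hJI x hx
  rw [mem_coinv_iff] at hx ⊢
  have hq : I.mkQ = Submodule.factor hJI ∘ₗ J.mkQ := rfl
  rw [hq, LinearMap.rTensor_comp_apply, hx]
  rfl

theorem sub_counit_smul_one_mem_of_mem_coinv {I : Submodule k H} {x : H}
    (hx : x ∈ coinv k H I) : x - Coalgebra.counit (R := k) x • 1 ∈ I := by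
  rw [mem_coinv_iff] at hx
  have h := congrArg (TensorProduct.rid k (H ⧸ I) ∘ (Coalgebra.counit (R := k)).lTensor _) hx
  rw [Function.comp_apply, ← LinearMap.comp_apply, LinearMap.lTensor_comp_rTensor,
    ← LinearMap.rTensor_comp_lTensor, LinearMap.comp_apply, Coalgebra.lTensor_counit_comul] at h
  simp only [LinearMap.rTensor_tmul, rid_tmul, one_smul] at h
  rw [← Submodule.Quotient.eq, Submodule.Quotient.mk_smul]
  exact h

theorem comul_mem_range_rTensor_coinv {I : Submodule k H} {x : H} (hx : x ∈ coinv k H I) :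
    Coalgebra.comul x ∈ LinearMap.range ((coinv k H I).subtype.rTensor H) := by
  have hexact := Module.Flat.rTensor_exact H (LinearMap.exact_subtype_ker_map
    ((I.mkQ.rTensor H ∘ₗ Coalgebra.comul) - TensorProduct.mk k (H ⧸ I) H (I.mkQ 1)))
  refine (hexact _).mp ?_
  have hcomul : (I.mkQ.rTensor H ∘ₗ Coalgebra.comul).rTensor H (Coalgebra.comul x) =
      (TensorProduct.mk k (H ⧸ I) H (I.mkQ 1)).rTensor H (Coalgebra.comul x) := by
    rw [rTensor_rTensor_comp_comul_comul, mem_coinv_iff.mp hx, LinearMap.lTensor_tmul,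
      rTensor_mk_apply_eq_assoc_symm]
  rw [LinearMap.rTensor_sub]
  exact sub_eq_zero.mpr hcomul

theorem le_coinv_of_comul_mem_range {B J : Submodule k H}
    (hB : ∀ b ∈ B, Coalgebra.comul b ∈ LinearMap.range (B.subtype.rTensor H))
    (hBJ : ∀ b ∈ B, b - Coalgebra.counit (R := k) b • 1 ∈ J) : B ≤ coinv k H J := by
  intro x hx
  obtain ⟨w, hw⟩ := hB x hx
  have hfactor : J.mkQ ∘ₗ B.subtype =
      LinearMap.toSpanSingleton k (H ⧸ J) (J.mkQ 1) ∘ₗ (Coalgebra.counit ∘ₗ B.subtype) := by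
    ext b
    simpa [sub_eq_zero] using (Submodule.Quotient.mk_eq_zero J).mpr (hBJ b b.2)
  rw [mem_coinv_iff, ← hw, ← LinearMap.rTensor_comp_apply, hfactor,
    LinearMap.rTensor_comp_apply, LinearMap.rTensor_comp_apply, hw,
    Coalgebra.rTensor_counit_comul]
  simp

theorem sub_counit_smul_one_mem_HSplus {S : Submodule k H} (hS : (1 : H) ∈ S) {b : H}
    (hb : b ∈ S) : b - Coalgebra.counit (R := k) b • 1 ∈ HSplus k H S := by
  refine Submodule.subset_span ⟨1, _, ⟨sub_mem hb (S.smul_mem _ hS), ?_⟩, (one_mul _).symm⟩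
  simp

theorem leftIdealGen_le {S : Set H} {I : Submodule k H} (hI : ∀ h x : H, x ∈ I → h * x ∈ I)
    (hS : S ⊆ I) : leftIdealGen k H S ≤ I :=
  Submodule.span_le.mpr fun _ ⟨h, b, hb, hz⟩ => hz ▸ hI h b (hS hb)

theorem plusPart_coinv_subset (I : Submodule k H) : plusPart k H (coinv k H I) ⊆ I :=
  fun x ⟨hx, hε⟩ => by simpa [hε] using sub_counit_smul_one_mem_of_mem_coinv hx

/-- For a left ideal coideal `I` and `B := H^{co H/I}`,
one has `B = H^{co H/(HB⁺)}`; that is, `Ψ ∘ Φ ∘ Ψ = Ψ`. -/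
theorem coinv_HSplus_coinv (k H : Type*) [Field k] [Ring H] [HopfAlgebra k H]
    (I : Submodule k H) (hI : IsLeftIdealCoideal k H I) :
    coinv k H I =
      coinv k H (HSplus k H ((coinv k H I : Submodule k H) : Set H)) := by
  refine le_antisymm ?_ (coinv_mono (leftIdealGen_le hI.mul_mem_left (plusPart_coinv_subset I)))
  exact le_coinv_of_comul_mem_range (fun _ => comul_mem_range_rTensor_coinv)
    fun _ => sub_counit_smul_one_mem_HSplus (one_mem_coinv I)

end HopfGalois
end
end
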